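/- Fix a constant q > 0 and the bowl transform ψ : ℝ^p → ℝ^(p+1). Then ψ is Lipschitz continuous: there exists a constant L > 0 such that ‖ψ(x) − ψ(y)‖ ≤ L·‖x − y‖ for all x, y ∈ ℝ^p. -/

import Mathlib

open Real

/-- The bowl transform `ψ : ℝ^p → ℝ^(p+1)`.  With `u(x) = tanh(‖x‖/q)`, the first `p`
coordinates are `v₁(x) = 10·u(x)²·(1−u(x))²·x` and the last coordinate is
`v₂(x) = 10·u(x)⁶·(1−u(x))²`. -/
noncomputable def bowl (p : ℕ) (q : ℝ) (x : EuclideanSpace ℝ (Fin p)) :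
    EuclideanSpace ℝ (Fin (p + 1)) :=
  WithLp.toLp 2 (Fin.snoc
    (fun i : Fin p =>
      10 * Real.tanh (‖x‖ / q) ^ 2 * (1 - Real.tanh (‖x‖ / q)) ^ 2 * x i)
    (10 * Real.tanh (‖x‖ / q) ^ 6 * (1 - Real.tanh (‖x‖ / q)) ^ 2) : Fin (p + 1) → ℝ)

/-
For `t = ‖x‖` and `u = tanh (t / q) ∈ [0, 1)`, the first `p` coordinates of `ψ x` are `φ(t) x` with
`φ(t) = 10 u² (1 - u)²`, and the last one is `h(t) = 10 u⁶ (1 - u)²`. Since `tanh' = 1 - tanh²`,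
`|h'| ≤ 60 / q`, and in `(t φ(t))' = φ(t) + t φ'(t)` the second term carries the factor
`(t / q) (1 - u) ≤ 1`, so `t ↦ t φ(t)` is Lipschitz on `[0, ∞)`. A bounded `φ` with `t ↦ t φ(t)`
Lipschitz makes `x ↦ φ(‖x‖) x` Lipschitz: write `φ(a) x - φ(b) y = φ(a) (x - y) + (φ(a) - φ(b)) y`
and `b (φ(a) - φ(b)) = (a φ(a) - b φ(b)) - (a - b) φ(a)` with `a = ‖x‖`, `b = ‖y‖`.
-/

theorem Real.hasDerivAt_tanh (x : ℝ) : HasDerivAt tanh (1 - tanh x ^ 2) x := by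
  have h := (hasDerivAt_sinh x).div (hasDerivAt_cosh x) (cosh_pos x).ne'
  rw [show sinh / cosh = tanh from funext fun y => (tanh_eq_sinh_div_cosh y).symm] at h
  refine h.congr_deriv ?_
  rw [tanh_eq_sinh_div_cosh]
  field_simp

theorem Real.tanh_nonneg {x : ℝ} (hx : 0 ≤ x) : 0 ≤ tanh x := by
  rw [tanh_eq_sinh_div_cosh]
  exact div_nonneg (sinh_nonneg_iff.2 hx) (cosh_pos x).le

theorem Real.mul_one_sub_tanh_le_one {x : ℝ} (hx : 0 ≤ x) : x * (1 - tanh x) ≤ 1 := by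
  have hexp : exp x * exp (-x) = 1 := by rw [← exp_add, add_neg_cancel, exp_zero]
  have hden : 0 < exp x + exp (-x) := by positivity
  rw [tanh_eq, one_sub_div hden.ne', mul_div_assoc', div_le_one hden]
  nlinarith [add_one_le_exp x, exp_pos (-x), sq_nonneg (exp x - exp (-x))]

theorem hasDerivAt_tanh_div (q t : ℝ) :
    HasDerivAt (fun s => tanh (s / q)) ((1 - tanh (t / q) ^ 2) / q) t := by
  refine ((hasDerivAt_tanh (t / q)).comp t ((hasDerivAt_id' t).div_const q)).congr_deriv ?_
  ring

theorem EuclideanSpace.norm_le_norm_init_add_abs_last {n : ℕ}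
    (z : EuclideanSpace ℝ (Fin (n + 1))) :
    ‖z‖ ≤ ‖WithLp.toLp 2 (Fin.init z.ofLp)‖ + |z (Fin.last n)| := by
  have h : ‖z‖ ^ 2 = ‖WithLp.toLp 2 (Fin.init z.ofLp)‖ ^ 2 + |z (Fin.last n)| ^ 2 := by
    simp [EuclideanSpace.norm_sq_eq, Fin.sum_univ_castSucc, Fin.init]
  nlinarith [norm_nonneg z, norm_nonneg (WithLp.toLp 2 (Fin.init z.ofLp)),
    abs_nonneg (z (Fin.last n))]

theorem norm_smul_sub_smul_le {E : Type*} [SeminormedAddCommGroup E] [NormedSpace ℝ E]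
    {φ : ℝ → ℝ} {A B : ℝ} (hA : ∀ t, 0 ≤ t → |φ t| ≤ A)
    (hB : ∀ s t, 0 ≤ s → 0 ≤ t → |s * φ s - t * φ t| ≤ B * |s - t|) (x y : E) :
    ‖φ ‖x‖ • x - φ ‖y‖ • y‖ ≤ (2 * A + B) * ‖x - y‖ := by
  have hxy : |‖x‖ - ‖y‖| ≤ ‖x - y‖ := abs_norm_sub_norm_le x y
  have hAx := hA ‖x‖ (norm_nonneg x)
  have hA₀ : 0 ≤ A := (abs_nonneg _).trans hAx
  have hB₀ : 0 ≤ B := by simpa using (abs_nonneg _).trans (hB 1 0 zero_le_one le_rfl)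
  have hjump : ‖(φ ‖x‖ - φ ‖y‖) • y‖ ≤ (A + B) * ‖x - y‖ :=
    calc ‖(φ ‖x‖ - φ ‖y‖) • y‖
        = |(‖x‖ * φ ‖x‖ - ‖y‖ * φ ‖y‖) - (‖x‖ - ‖y‖) * φ ‖x‖| := by
          rw [show ‖x‖ * φ ‖x‖ - ‖y‖ * φ ‖y‖ - (‖x‖ - ‖y‖) * φ ‖x‖ = (φ ‖x‖ - φ ‖y‖) * ‖y‖ by
            ring, abs_mul, abs_of_nonneg (norm_nonneg y), norm_smul, Real.norm_eq_abs]
      _ ≤ |‖x‖ * φ ‖x‖ - ‖y‖ * φ ‖y‖| + |‖x‖ - ‖y‖| * |φ ‖x‖| := by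
          rw [← abs_mul]; exact abs_sub _ _
      _ ≤ B * |‖x‖ - ‖y‖| + |‖x‖ - ‖y‖| * A := by
          gcongr
          exact hB _ _ (norm_nonneg x) (norm_nonneg y)
      _ ≤ (A + B) * ‖x - y‖ := by nlinarith [abs_nonneg (‖x‖ - ‖y‖)]
  calc ‖φ ‖x‖ • x - φ ‖y‖ • y‖ = ‖φ ‖x‖ • (x - y) + (φ ‖x‖ - φ ‖y‖) • y‖ := by
        rw [smul_sub, sub_smul, sub_add_sub_cancel]
    _ ≤ A * ‖x - y‖ + (A + B) * ‖x - y‖ := by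
        refine (norm_add_le _ _).trans (add_le_add ?_ hjump)
        rw [norm_smul, Real.norm_eq_abs]
        gcongr
    _ = (2 * A + B) * ‖x - y‖ := by ring

noncomputable def bowlScale (q t : ℝ) : ℝ :=
  10 * tanh (t / q) ^ 2 * (1 - tanh (t / q)) ^ 2

noncomputable def bowlHeight (q t : ℝ) : ℝ :=
  10 * tanh (t / q) ^ 6 * (1 - tanh (t / q)) ^ 2

theorem norm_bowl_sub_le (p : ℕ) (q : ℝ) (x y : EuclideanSpace ℝ (Fin p)) :
    ‖bowl p q x - bowl p q y‖ ≤
      ‖bowlScale q ‖x‖ • x - bowlScale q ‖y‖ • y‖ + |bowlHeight q ‖x‖ - bowlHeight q ‖y‖| := by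
  have hinit : WithLp.toLp 2 (Fin.init (bowl p q x - bowl p q y).ofLp)
      = bowlScale q ‖x‖ • x - bowlScale q ‖y‖ • y := by
    ext i
    simp [bowl, bowlScale, Fin.init]
  have hlast : (bowl p q x - bowl p q y) (Fin.last p) = bowlHeight q ‖x‖ - bowlHeight q ‖y‖ := by
    simp [bowl, bowlHeight]
  have h := EuclideanSpace.norm_le_norm_init_add_abs_last (bowl p q x - bowl p q y)
  rwa [hinit, hlast] at h

theorem hasDerivAt_mul_bowlScale (q t : ℝ) :
    HasDerivAt (fun s => s * bowlScale q s)
      (bowlScale q t + 20 * tanh (t / q) * (1 - 2 * tanh (t / q)) * (1 + tanh (t / q)) *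
        (1 - tanh (t / q)) * (t / q * (1 - tanh (t / q)))) t := by
  have hu := hasDerivAt_tanh_div q t
  refine ((hasDerivAt_id' t).fun_mul (((hu.fun_pow 2).const_mul 10).fun_mul
    ((hu.const_sub 1).fun_pow 2))).congr_deriv ?_
  simp only [bowlScale]
  ring

theorem hasDerivAt_bowlHeight (q t : ℝ) :
    HasDerivAt (bowlHeight q)
      (20 * tanh (t / q) ^ 5 * (1 - tanh (t / q)) * (3 - 4 * tanh (t / q)) *
        (1 - tanh (t / q) ^ 2) / q) t := by
  have hu := hasDerivAt_tanh_div q t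
  refine (((hu.fun_pow 6).const_mul 10).fun_mul ((hu.const_sub 1).fun_pow 2)).congr_deriv ?_
  ring

theorem tanh_div_mem_Icc {q t : ℝ} (hq : 0 < q) (ht : 0 ≤ t) : tanh (t / q) ∈ Set.Icc 0 1 :=
  ⟨tanh_nonneg (div_nonneg ht hq.le), (tanh_lt_one _).le⟩

theorem abs_bowlScale_le_one {q t : ℝ} (hq : 0 < q) (ht : 0 ≤ t) : |bowlScale q t| ≤ 1 := by
  obtain ⟨hu₀, hu₁⟩ := tanh_div_mem_Icc hq ht
  set u := tanh (t / q)
  have hquarter : u * (1 - u) ≤ 1 / 4 := by nlinarith [sq_nonneg (2 * u - 1)]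
  have hprod : 0 ≤ u * (1 - u) := mul_nonneg hu₀ (by linarith)
  rw [bowlScale, abs_of_nonneg (by positivity)]
  nlinarith

theorem abs_mul_bowlScale_sub_le {q a b : ℝ} (hq : 0 < q) (ha : 0 ≤ a) (hb : 0 ≤ b) :
    |a * bowlScale q a - b * bowlScale q b| ≤ 11 * |a - b| := by
  simp only [← Real.norm_eq_abs]
  refine (convex_Ici 0).norm_image_sub_le_of_norm_hasDerivWithin_le
    (fun t _ => (hasDerivAt_mul_bowlScale q t).hasDerivWithinAt) (fun t ht => ?_) hb ha
  obtain ⟨hu₀, hu₁⟩ := tanh_div_mem_Icc hq ht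
  have hB₁ : t / q * (1 - tanh (t / q)) ≤ 1 := mul_one_sub_tanh_le_one (div_nonneg ht hq.le)
  have hB₀ : 0 ≤ t / q * (1 - tanh (t / q)) := mul_nonneg (div_nonneg ht hq.le) (by linarith)
  obtain ⟨hφ₀, hφ₁⟩ := abs_le.1 (abs_bowlScale_le_one hq ht)
  generalize t / q * (1 - tanh (t / q)) = B at hB₀ hB₁
  generalize bowlScale q t = φ at hφ₀ hφ₁
  generalize tanh (t / q) = u at hu₀ hu₁
  have hquarter : u * (1 - u) ≤ 1 / 4 := by nlinarith [sq_nonneg (2 * u - 1)]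
  have hprod : 0 ≤ u * (1 - u) := mul_nonneg hu₀ (by linarith)
  rw [Real.norm_eq_abs, abs_le]
  constructor <;> nlinarith [mul_nonneg hprod hB₀, mul_nonneg (mul_nonneg hprod hB₀) hu₀]

theorem abs_bowlHeight_sub_le {q a b : ℝ} (hq : 0 < q) (ha : 0 ≤ a) (hb : 0 ≤ b) :
    |bowlHeight q a - bowlHeight q b| ≤ 60 / q * |a - b| := by
  simp only [← Real.norm_eq_abs]
  refine (convex_Ici 0).norm_image_sub_le_of_norm_hasDerivWithin_le
    (fun t _ => (hasDerivAt_bowlHeight q t).hasDerivWithinAt) (fun t ht => ?_) hb ha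
  obtain ⟨hu₀, hu₁⟩ := tanh_div_mem_Icc hq ht
  generalize tanh (t / q) = u at hu₀ hu₁
  have h5 : u ^ 5 ≤ 1 := pow_le_one₀ hu₀ hu₁
  have h1 : 0 ≤ (1 - u) * (1 - u ^ 2) := mul_nonneg (by linarith) (by nlinarith)
  have h2 : (1 - u) * (1 - u ^ 2) ≤ 1 := by nlinarith
  have h3 : |3 - 4 * u| ≤ 3 := abs_le.2 ⟨by linarith, by linarith⟩
  rw [norm_div, Real.norm_eq_abs, Real.norm_eq_abs, abs_of_pos hq]
  gcongr
  calc |20 * u ^ 5 * (1 - u) * (3 - 4 * u) * (1 - u ^ 2)|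
      = 20 * (u ^ 5 * ((1 - u) * (1 - u ^ 2))) * |3 - 4 * u| := by
        rw [← abs_of_nonneg (by positivity : 0 ≤ 20 * (u ^ 5 * ((1 - u) * (1 - u ^ 2)))),
          ← abs_mul]
        ring_nf
    _ ≤ 20 * (1 * 1) * 3 := by gcongr
    _ = 60 := by norm_num

/-- for `q > 0`, the bowl transform `ψ : ℝ^p → ℝ^(p+1)` is Lipschitz:
there is `L > 0` with `‖ψ(x) − ψ(y)‖ ≤ L·‖x − y‖` for all `x, y`. -/
theorem bowl_lipschitz (p : ℕ) (q : ℝ) (hq : 0 < q) :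
    ∃ L : ℝ, 0 < L ∧ ∀ x y : EuclideanSpace ℝ (Fin p),
      ‖bowl p q x - bowl p q y‖ ≤ L * ‖x - y‖ := by
  refine ⟨13 + 60 / q, by positivity, fun x y => ?_⟩
  have hscale := norm_smul_sub_smul_le (fun t ht => abs_bowlScale_le_one hq ht)
    (fun s t hs ht => abs_mul_bowlScale_sub_le hq hs ht) x y
  have hheight := abs_bowlHeight_sub_le hq (norm_nonneg x) (norm_nonneg y)
  calc ‖bowl p q x - bowl p q y‖
      ≤ (2 * 1 + 11) * ‖x - y‖ + 60 / q * |‖x‖ - ‖y‖| :=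
        (norm_bowl_sub_le p q x y).trans (add_le_add hscale hheight)
    _ ≤ 13 * ‖x - y‖ + 60 / q * ‖x - y‖ := by
        gcongr
        · norm_num
        · exact abs_norm_sub_norm_le x y
    _ = (13 + 60 / q) * ‖x - y‖ := by ring
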